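/- For every graph G the following are equivalent: (1) every vertex of G has exactly one adjacent vertex (degree 1); (2) there exist an ultrametric d on X = V(G) and disjoint proximinal subsets A, B of (X,d) with X = A ∪ B such that G is bipartite with parts A and B and G is path-proximinal for A and B with respect to d. -/

import Mathlib

open SimpleGraph Set

/-- A "graph on a vertex subset": a subgraph of the complete graph on `V`. -/
abbrev Gr (V : Type) := SimpleGraph.Subgraph (⊤ : SimpleGraph V)

/-- `P` is the path graph `(u₀, …, u_k)` whose vertex list is `l`. -/
def IsPathGraphOn {V : Type} (l : List V) (P : Gr V) : Prop :=
  l.Nodup ∧ 2 ≤ l.length ∧ P.verts = {v | v ∈ l} ∧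
    ∀ x y, P.Adj x y ↔ ([x, y] <:+: l ∨ [y, x] <:+: l)

/-- `P` is a path graph. -/
def IsPathGraph {V : Type} (P : Gr V) : Prop := ∃ l, IsPathGraphOn l P

/-- `P` is a path joining `a` and `b`. -/
def IsPathFrom {V : Type} (P : Gr V) (a b : V) : Prop :=
  ∃ l, IsPathGraphOn l P ∧
    ((l.head? = some a ∧ l.getLast? = some b) ∨ (l.head? = some b ∧ l.getLast? = some a))

/-- `P` is a be-path of `A` and `B`: a path with vertices in `A ∪ B` having a unique
edge `{a₀, b₀}` meeting both `A` and `B`. -/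
def IsBePath {V : Type} (A B : Set V) (P : Gr V) : Prop :=
  IsPathGraph P ∧ P.verts ⊆ A ∪ B ∧
    ∃ a₀ b₀, a₀ ∈ A ∧ b₀ ∈ B ∧ P.Adj a₀ b₀ ∧
      ∀ x y, P.Adj x y → x ∈ A → y ∈ B → x = a₀ ∧ y = b₀

/-- `G` is a path-bipartite graph of `A` and `B`: `A`, `B` are disjoint nonempty subsets of
`V(G)` and `G` is the union of a nonempty family of be-paths of `A` and `B`. -/
def IsPathBipartite {V : Type} (A B : Set V) (G : Gr V) : Prop :=
  A.Nonempty ∧ B.Nonempty ∧ Disjoint A B ∧ A ⊆ G.verts ∧ B ⊆ G.verts ∧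
    ∃ Ps : Set (Gr V), Ps.Nonempty ∧ (∀ P ∈ Ps, IsBePath A B P) ∧ G = sSup Ps

/-- `G` is connected: any two distinct vertices are joined by a path in `G`. -/
def ConnectedGr {V : Type} (G : Gr V) : Prop :=
  ∀ u v, u ∈ G.verts → v ∈ G.verts → u ≠ v → ∃ P, P ≤ G ∧ IsPathFrom P u v

/-- `H` is a connected component of `G`: a maximal connected subgraph. -/
def IsComponent {V : Type} (G H : Gr V) : Prop :=
  H ≤ G ∧ ConnectedGr H ∧ ∀ Γ, Γ ≤ G → ConnectedGr Γ → H ≤ Γ → H = Γ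

/-- Some `a ∈ A` and `b ∈ B` are joined by a be-path of `A` and `B` contained in `G`,
i.e. `(a, b) ∈ 𝓑_path(G)`. -/
def BePathJoined {V : Type} (G : Gr V) (A B : Set V) (a b : V) : Prop :=
  ∃ P, P ≤ G ∧ IsBePath A B P ∧ IsPathFrom P a b

/-- `G` is path-complete: every `(a,b) ∈ A × B` is joined by a be-path in `G`. -/
def PathComplete {V : Type} (G : Gr V) (A B : Set V) : Prop :=
  ∀ a ∈ A, ∀ b ∈ B, BePathJoined G A B a b

/-- The induced-bipartite subgraph `G[A, B]`. -/
def induceBip {V : Type} (G : Gr V) (A B : Set V) : Gr V where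
  verts := A ∪ B
  Adj x y := G.Adj x y ∧ ((x ∈ A ∧ y ∈ B) ∨ (x ∈ B ∧ y ∈ A))
  adj_sub h := G.adj_sub h.1
  edge_vert h := h.2.elim (fun hh => Or.inl hh.1) (fun hh => Or.inr hh.1)
  symm := ⟨fun x y h => ⟨h.1.symm, h.2.elim (fun hh => Or.inr ⟨hh.2, hh.1⟩) (fun hh => Or.inl ⟨hh.2, hh.1⟩)⟩⟩

/-- `d` is a semimetric. -/
def IsSemimetric {X : Type} (d : X → X → ℝ) : Prop :=
  (∀ x y, 0 ≤ d x y) ∧ (∀ x y, d x y = d y x) ∧ ∀ x y, d x y = 0 ↔ x = y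

/-- `d` is a metric. -/
def IsMetric {X : Type} (d : X → X → ℝ) : Prop :=
  IsSemimetric d ∧ ∀ x y z, d x y ≤ d x z + d z y

/-- `d` is an ultrametric. -/
def IsUltrametric {X : Type} (d : X → X → ℝ) : Prop :=
  IsSemimetric d ∧ ∀ x y z, d x y ≤ max (d x z) (d z y)

/-- `dist(A, B) = inf{d(a,b) : a ∈ A, b ∈ B}`. -/
noncomputable def setDist {X : Type} (d : X → X → ℝ) (A B : Set X) : ℝ :=
  sInf {r | ∃ a ∈ A, ∃ b ∈ B, d a b = r}

/-- `A` is a proximinal subset: every point has a best approximation in `A`. -/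
def ProximinalSet {X : Type} (d : X → X → ℝ) (A : Set X) : Prop :=
  ∀ x, ∃ a₀ ∈ A, d x a₀ = setDist d {x} A

/-- `G` is path-proximinal for `A` and `B` w.r.t. the semimetric `d` on `X = A ∪ B`. -/
def IsPathProximinal {X : Type} (d : X → X → ℝ) (A B : Set X) (G : Gr X) : Prop :=
  IsPathBipartite A B G ∧ ProximinalSet d A ∧ ProximinalSet d B ∧
    ∀ x ∈ A ∪ B, ∀ y ∈ A ∪ B, x ≠ y → (G.Adj x y ↔ d x y ≤ setDist d A B)

/-- `G` is a proximinal bipartite graph with parts `A` and `B` for `(X, d)`. -/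
def IsProximinalGraph {X : Type} (d : X → X → ℝ) (A B : Set X) (G : Gr X) : Prop :=
  A.Nonempty ∧ B.Nonempty ∧ Disjoint A B ∧ G.verts = A ∪ B ∧
    (∀ x y, G.Adj x y → (x ∈ A ∧ y ∈ B) ∨ (x ∈ B ∧ y ∈ A)) ∧
    ProximinalSet d A ∧ ProximinalSet d B ∧
    ∀ a ∈ A, ∀ b ∈ B, (G.Adj a b ↔ d a b = setDist d A B)


section Aux

lemma aux_infix_pair {V : Type} {x y a b : V} : [x, y] <:+: [a, b] ↔ x = a ∧ y = b := by
  constructor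
  · intro h
    have := h.sublist.eq_of_length rfl
    simp_all
  · rintro ⟨rfl, rfl⟩; exact List.infix_rfl

lemma aux_exists_adj : ∀ {V : Type} (l : List V), 2 ≤ l.length → ∀ v ∈ l,
    ∃ x, [v, x] <:+: l ∨ [x, v] <:+: l := by
  intro V l
  induction l with
  | nil => simp
  | cons a rest ih =>
    intro hlen v hv
    match rest, hlen with
    | b :: t, _ =>
      rcases List.mem_cons.mp hv with rfl | hv'
      · exact ⟨b, Or.inl ⟨[], t, rfl⟩⟩
      · match t, hv' with
        | [], hv' =>
          simp only [List.mem_singleton] at hv'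
          subst hv'
          exact ⟨a, Or.inr List.infix_rfl⟩
        | c :: t', hv' =>
          obtain ⟨x, hx⟩ := ih (by simp) v hv'
          exact ⟨x, hx.imp (fun h => h.trans (List.infix_cons List.infix_rfl))
            (fun h => h.trans (List.infix_cons List.infix_rfl))⟩

lemma aux_setDist_eq {X : Type} (d : X → X → ℝ) (S T : Set X) (c : ℝ)
    (hmem : ∃ a ∈ S, ∃ b ∈ T, d a b = c)
    (hlb : ∀ a ∈ S, ∀ b ∈ T, c ≤ d a b) :
    setDist d S T = c := by
  obtain ⟨a, ha, b, hb, hab⟩ := hmem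
  apply le_antisymm
  · exact csInf_le ⟨c, by rintro r ⟨a', ha', b', hb', rfl⟩; exact hlb a' ha' b' hb'⟩
      ⟨a, ha, b, hb, hab⟩
  · exact le_csInf ⟨d a b, a, ha, b, hb, rfl⟩
      (by rintro r ⟨a', ha', b', hb', rfl⟩; exact hlb a' ha' b' hb')

def pairGr {V : Type} (a b : V) : Gr V where
  verts := {a, b}
  Adj x y := x ≠ y ∧ ((x = a ∧ y = b) ∨ (x = b ∧ y = a))
  adj_sub h := h.1
  edge_vert h := by rcases h.2 with ⟨rfl, rfl⟩ | ⟨rfl, rfl⟩ <;> simp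
  symm := ⟨fun x y h => ⟨h.1.symm, h.2.symm.imp (fun hh => ⟨hh.2, hh.1⟩) (fun hh => ⟨hh.2, hh.1⟩)⟩⟩

lemma aux_pairGr_path {V : Type} {a b : V} (hab : a ≠ b) :
    IsPathGraphOn [a, b] (pairGr a b) := by
  refine ⟨by simp [hab], by simp, by ext v; simp [pairGr], ?_⟩
  intro x y
  simp only [pairGr, aux_infix_pair]
  constructor
  · rintro ⟨_, h⟩; exact h.imp id (fun hh => ⟨hh.2, hh.1⟩)
  · rintro (⟨rfl, rfl⟩ | ⟨rfl, rfl⟩)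
    · exact ⟨hab, Or.inl ⟨rfl, rfl⟩⟩
    · exact ⟨hab.symm, Or.inr ⟨rfl, rfl⟩⟩

end Aux

theorem stmt18 {X : Type} [Nonempty X] (G : Gr X) (hV : G.verts = Set.univ) :
    (∀ v : X, ∃! u, G.Adj v u) ↔
      ∃ (d : X → X → ℝ) (A B : Set X), IsUltrametric d ∧ Disjoint A B ∧
        ProximinalSet d A ∧ ProximinalSet d B ∧ A ∪ B = Set.univ ∧
        A.Nonempty ∧ B.Nonempty ∧
        (∀ x y, G.Adj x y → (x ∈ A ∧ y ∈ B) ∨ (x ∈ B ∧ y ∈ A)) ∧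
        IsPathProximinal d A B G := by
  classical
  constructor
  · intro hdeg
    choose M hM hMu using hdeg
    have hne : ∀ v, v ≠ M v := fun v => G.adj_sub (hM v)
    have hMM : ∀ v, M (M v) = v := fun v => (hMu (M v) v (hM v).symm).symm
    -- the two parts, via a well-ordering
    let r : X → X → Prop := WellOrderingRel
    have : IsWellOrder X r := WellOrderingRel.isWellOrder
    set A : Set X := {v | r v (M v)} with hAdef
    set B : Set X := {v | r (M v) v} with hBdef
    have hmemA : ∀ v, v ∈ A ↔ r v (M v) := fun v => Iff.rfl
    have hmemB : ∀ v, v ∈ B ↔ r (M v) v := fun v => Iff.rfl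
    have hunion : A ∪ B = Set.univ := by
      ext v
      simp only [Set.mem_union, Set.mem_univ, iff_true, hmemA, hmemB]
      rcases trichotomous_of r v (M v) with h | h | h
      · exact Or.inl h
      · exact absurd h (hne v)
      · exact Or.inr h
    have hdisj : Disjoint A B := by
      rw [Set.disjoint_left]
      intro v hvA hvB
      exact asymm_of r hvA hvB
    have hAM : ∀ v ∈ A, M v ∈ B := by
      intro v hv
      show r (M (M v)) (M v)
      rwa [hMM]
    have hBM : ∀ v ∈ B, M v ∈ A := by
      intro v hv
      show r (M v) (M (M v))
      rwa [hMM]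
    have hmemAB : ∀ v : X, v ∈ A ∨ v ∈ B := by
      intro v
      have : v ∈ A ∪ B := by rw [hunion]; exact Set.mem_univ v
      exact this
    have hAne : A.Nonempty := by
      obtain ⟨v⟩ := ‹Nonempty X›
      rcases hmemAB v with h | h
      · exact ⟨v, h⟩
      · exact ⟨M v, hBM v h⟩
    have hBne : B.Nonempty := by
      obtain ⟨v, hv⟩ := hAne
      exact ⟨M v, hAM v hv⟩
    have hcross : ∀ x y, G.Adj x y → (x ∈ A ∧ y ∈ B) ∨ (x ∈ B ∧ y ∈ A) := by
      intro x y h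
      have hy : y = M x := hMu x y h
      subst hy
      rcases hmemAB x with hx | hx
      · exact Or.inl ⟨hx, hAM x hx⟩
      · exact Or.inr ⟨hx, hBM x hx⟩
    -- the ultrametric
    set d : X → X → ℝ := fun x y => if x = y then 0 else if G.Adj x y then 1 else 2 with hddef
    have hd_self : ∀ x, d x x = 0 := by intro x; simp [hddef]
    have hd_adj : ∀ x y, G.Adj x y → d x y = 1 := by
      intro x y h
      have hxy : x ≠ y := G.adj_sub h
      simp only [hddef]
      rw [if_neg hxy, if_pos h]
    have hd_nadj : ∀ x y, x ≠ y → ¬G.Adj x y → d x y = 2 := by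
      intro x y h h'
      simp [hddef, h, h']
    have hd_nonneg : ∀ x y, 0 ≤ d x y := by
      intro x y
      simp only [hddef]
      split_ifs <;> norm_num
    have hd_ge_one : ∀ x y, x ≠ y → 1 ≤ d x y := by
      intro x y h
      simp only [hddef, if_neg h]
      split_ifs <;> norm_num
    have hd_symm : ∀ x y, d x y = d y x := by
      intro x y
      by_cases h1 : x = y
      · subst h1; rfl
      · rw [hddef]
        simp only
        rw [if_neg h1, if_neg (Ne.symm h1)]
        by_cases h2 : G.Adj x y
        · rw [if_pos h2, if_pos h2.symm]
        · rw [if_neg h2, if_neg (fun h => h2 h.symm)]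
    have hd_eq_zero : ∀ x y, d x y = 0 ↔ x = y := by
      intro x y
      constructor
      · intro h
        by_contra hxy
        have := hd_ge_one x y hxy
        linarith
      · rintro rfl; exact hd_self x
    have hd_le_one : ∀ x y, x ≠ y → (d x y ≤ 1 ↔ G.Adj x y) := by
      intro x y h
      constructor
      · intro hle
        by_contra hadj
        rw [hd_nadj x y h hadj] at hle
        linarith
      · intro hadj
        rw [hd_adj x y hadj]
    have hultra : IsUltrametric d := by
      refine ⟨⟨hd_nonneg, hd_symm, hd_eq_zero⟩, ?_⟩
      intro x y z
      by_cases hxy : x = y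
      · subst hxy
        rw [hd_self]
        exact le_max_of_le_left (hd_nonneg x z)
      · by_cases hxz : x = z
        · subst hxz
          exact le_max_of_le_right le_rfl
        by_cases hzy : z = y
        · subst hzy
          exact le_max_of_le_left le_rfl
        -- x, y, z pairwise distinct
        by_cases haxy : G.Adj x y
        · rw [hd_adj x y haxy]
          exact le_max_of_le_left (hd_ge_one x z hxz)
        · rw [hd_nadj x y hxy haxy]
          by_cases haxz : G.Adj x z
          · by_cases hazy : G.Adj z y
            · exfalso
              have h1 : x = M z := hMu z x haxz.symm
              have h2 : y = M z := hMu z y hazy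
              exact hxy (h1.trans h2.symm)
            · rw [hd_nadj z y hzy hazy]
              exact le_max_of_le_right le_rfl
          · rw [hd_nadj x z hxz haxz]
            exact le_max_of_le_left le_rfl
    -- distances
    have hd_cross_ge : ∀ a ∈ A, ∀ b ∈ B, (1 : ℝ) ≤ d a b := by
      intro a ha b hb
      exact hd_ge_one a b (fun h => (Set.disjoint_left.mp hdisj ha) (h ▸ hb))
    have hAB1 : setDist d A B = 1 := by
      obtain ⟨a, ha⟩ := hAne
      exact aux_setDist_eq d A B 1 ⟨a, ha, M a, hAM a ha, hd_adj a (M a) (hM a)⟩ hd_cross_ge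
    have hproxA : ProximinalSet d A := by
      intro x
      rcases hmemAB x with hx | hx
      · refine ⟨x, hx, ?_⟩
        rw [hd_self]
        symm
        exact aux_setDist_eq d {x} A 0 ⟨x, rfl, x, hx, hd_self x⟩
          (fun a _ b _ => hd_nonneg a b)
      · refine ⟨M x, hBM x hx, ?_⟩
        rw [hd_adj x (M x) (hM x)]
        symm
        refine aux_setDist_eq d {x} A 1 ⟨x, rfl, M x, hBM x hx, hd_adj x (M x) (hM x)⟩ ?_
        rintro a rfl b hb
        exact hd_ge_one a b (fun h => (Set.disjoint_left.mp hdisj (h ▸ hb)) hx)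
    have hproxB : ProximinalSet d B := by
      intro x
      rcases hmemAB x with hx | hx
      · refine ⟨M x, hAM x hx, ?_⟩
        rw [hd_adj x (M x) (hM x)]
        symm
        refine aux_setDist_eq d {x} B 1 ⟨x, rfl, M x, hAM x hx, hd_adj x (M x) (hM x)⟩ ?_
        rintro a rfl b hb
        exact hd_ge_one a b (fun h => (Set.disjoint_left.mp hdisj hx) (h ▸ hb))
      · refine ⟨x, hx, ?_⟩
        rw [hd_self]
        symm
        exact aux_setDist_eq d {x} B 0 ⟨x, rfl, x, hx, hd_self x⟩
          (fun a _ b _ => hd_nonneg a b)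
    -- path-bipartite structure
    set Ps : Set (Gr X) := {P | ∃ a b, a ∈ A ∧ b ∈ B ∧ G.Adj a b ∧ P = pairGr a b} with hPsdef
    have hPsne : Ps.Nonempty := by
      obtain ⟨a, ha⟩ := hAne
      exact ⟨pairGr a (M a), a, M a, ha, hAM a ha, hM a, rfl⟩
    have hbe : ∀ P ∈ Ps, IsBePath A B P := by
      rintro P ⟨a, b, ha, hb, hab, rfl⟩
      have hne' : a ≠ b := G.adj_sub hab
      refine ⟨⟨[a, b], aux_pairGr_path hne'⟩, ?_, a, b, ha, hb,
        ⟨hne', Or.inl ⟨rfl, rfl⟩⟩, ?_⟩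
      · rw [hunion]; exact Set.subset_univ _
      · rintro x y ⟨hxy, ⟨rfl, rfl⟩ | ⟨rfl, rfl⟩⟩ hxA hyB
        · exact ⟨rfl, rfl⟩
        · exact absurd hxA (Set.disjoint_right.mp hdisj hb)
    have hGsup : G = sSup Ps := by
      apply le_antisymm
      · constructor
        · rw [SimpleGraph.Subgraph.verts_sSup, hV]
          intro v _
          rw [Set.mem_iUnion₂]
          rcases hmemAB v with hv | hv
          · exact ⟨pairGr v (M v), ⟨v, M v, hv, hAM v hv, hM v, rfl⟩, Or.inl rfl⟩
          · exact ⟨pairGr (M v) v, ⟨M v, v, hBM v hv, hv, (hM v).symm, rfl⟩, Or.inr rfl⟩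
        · intro x y h
          rw [SimpleGraph.Subgraph.sSup_adj]
          rcases hcross x y h with ⟨hx, hy⟩ | ⟨hx, hy⟩
          · exact ⟨pairGr x y, ⟨x, y, hx, hy, h, rfl⟩, G.adj_sub h, Or.inl ⟨rfl, rfl⟩⟩
          · exact ⟨pairGr y x, ⟨y, x, hy, hx, h.symm, rfl⟩, G.adj_sub h, Or.inr ⟨rfl, rfl⟩⟩
      · apply sSup_le
        rintro P ⟨a, b, ha, hb, hab, rfl⟩
        constructor
        · rw [hV]; exact Set.subset_univ _
        · rintro x y ⟨hxy, ⟨rfl, rfl⟩ | ⟨rfl, rfl⟩⟩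
          · exact hab
          · exact hab.symm
    have hbip : IsPathBipartite A B G :=
      ⟨hAne, hBne, hdisj, by rw [hV]; exact Set.subset_univ _,
        by rw [hV]; exact Set.subset_univ _, Ps, hPsne, hbe, hGsup⟩
    refine ⟨d, A, B, hultra, hdisj, hproxA, hproxB, hunion, hAne, hBne, hcross,
      hbip, hproxA, hproxB, ?_⟩
    intro x _ y _ hxy
    rw [hAB1]
    exact hd_le_one x y hxy |>.symm
  · rintro ⟨d, A, B, hultra, hdisj, _, _, hunion, _, _, hcross, hbip, _, _, hadj⟩
    obtain ⟨_, _, _, _, _, Ps, hPsne, hbe, hGsup⟩ := hbip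
    have hABuniv : ∀ x : X, x ∈ A ∪ B := fun x => hunion ▸ Set.mem_univ x
    intro v
    -- existence of a neighbour
    have hvG : v ∈ G.verts := hV ▸ Set.mem_univ v
    obtain ⟨P, hPmem, hvP⟩ : ∃ P, P ∈ Ps ∧ v ∈ P.verts := by
      rw [hGsup, SimpleGraph.Subgraph.verts_sSup] at hvG
      obtain ⟨P, hP, hv⟩ := Set.mem_iUnion₂.mp hvG
      exact ⟨P, hP, hv⟩
    obtain ⟨⟨l, hnd, hlen, hverts, hPadj⟩, _, _⟩ := hbe P hPmem
    have hvl : v ∈ l := by rwa [hverts] at hvP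
    obtain ⟨u, hu⟩ := aux_exists_adj l hlen v hvl
    have hPvu : P.Adj v u := (hPadj v u).mpr hu
    have hGvu : G.Adj v u := by
      rw [hGsup, SimpleGraph.Subgraph.sSup_adj]
      exact ⟨P, hPmem, hPvu⟩
    refine ⟨u, hGvu, ?_⟩
    -- uniqueness
    intro w hGvw
    by_contra hwu
    have hvu : v ≠ u := G.adj_sub hGvu
    have hvw : v ≠ w := G.adj_sub hGvw
    have hdvu : d v u ≤ setDist d A B :=
      (hadj v (hABuniv v) u (hABuniv u) hvu).mp hGvu
    have hdvw : d v w ≤ setDist d A B :=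
      (hadj v (hABuniv v) w (hABuniv w) hvw).mp hGvw
    have hdwu : d w u ≤ setDist d A B := by
      calc d w u ≤ max (d w v) (d v u) := hultra.2 w u v
        _ ≤ setDist d A B := by
            rw [hultra.1.2.1 w v]
            exact max_le hdvw hdvu
    have hGwu : G.Adj w u := (hadj w (hABuniv w) u (hABuniv u) hwu).mpr hdwu
    -- but w and u are on the same side
    rcases hcross v u hGvu with ⟨hvA, huB⟩ | ⟨hvB, huA⟩
    · rcases hcross v w hGvw with ⟨_, hwB⟩ | ⟨hvB, _⟩
      · rcases hcross w u hGwu with ⟨hwA, _⟩ | ⟨_, huA⟩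
        · exact Set.disjoint_left.mp hdisj hwA hwB
        · exact Set.disjoint_left.mp hdisj huA huB
      · exact Set.disjoint_left.mp hdisj hvA hvB
    · rcases hcross v w hGvw with ⟨hvA, _⟩ | ⟨_, hwA⟩
      · exact Set.disjoint_left.mp hdisj hvA hvB
      · rcases hcross w u hGwu with ⟨_, huB⟩ | ⟨hwB, _⟩
        · exact Set.disjoint_left.mp hdisj huA huB
        · exact Set.disjoint_left.mp hdisj hwA hwB
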